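/- arXiv:2211.11464 — 4 statements merged into one kernel-verified Lean document; each statement's English description precedes it below -/
import Mathlib

section
/- Let u : ℝⁿ → ℝ be C¹ with Lipschitz gradient on a convex open set U, let x′, x ∈ U with ∇u(x′) = 0 and x ≠ x′, and suppose: (i) |∇²u(z) − A| ≤ ε for a.e. z on the segment [x′,x], where A is a symmetric matrix with A·(x−x′) = −λ(x−x′) for some λ > 0 and ‖A‖ ≤ Λ; (ii) |∇u(x)/|∇u(x)| + (x−x′)/|x−x′|| ≤ ε. Then |∇u(x)| ≥ (λ − ε(1 + Λ))·|x − x′|. -/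
open RealInnerProductSpace

/-!
Apply the mean value inequality to `∇u - A` on the segment `[x', x]`: its derivative has norm
at most `ε` there, so `‖∇u(x) + λ (x - x')‖ = ‖(∇u - A)(x) - (∇u - A)(x')‖ ≤ ε ‖x - x'‖`,
and the triangle inequality gives `‖∇u(x)‖ ≥ (λ - ε) ‖x - x'‖ ≥ (λ - ε (1 + Λ)) ‖x - x'‖`.
-/

theorem ContDiffAt.differentiableAt_gradient {F : Type*} [NormedAddCommGroup F]
    [InnerProductSpace ℝ F] [CompleteSpace F] {u : F → ℝ} {z : F}
    (hu : ContDiffAt ℝ 2 u z) : DifferentiableAt ℝ (gradient u) z :=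
  (InnerProductSpace.toDual ℝ F).symm.toContinuousLinearEquiv.differentiableAt.comp z
    ((hu.fderiv_right (by norm_num)).differentiableAt one_ne_zero)

theorem Convex.le_norm_of_norm_fderiv_sub_le {E : Type*} [NormedAddCommGroup E]
    [NormedSpace ℝ E] {g : E → E} {A : E →L[ℝ] E} {s : Set E} {x' x : E} {lam ε : ℝ}
    (hs : Convex ℝ s) (hx' : x' ∈ s) (hx : x ∈ s) (hg0 : g x' = 0)
    (heig : A (x - x') = -lam • (x - x')) (hg : ∀ z ∈ s, DifferentiableAt ℝ g z)
    (hbound : ∀ z ∈ s, ‖fderiv ℝ g z - A‖ ≤ ε) :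
    (lam - ε) * ‖x - x'‖ ≤ ‖g x‖ := by
  have hmvt : ‖g x + lam • (x - x')‖ ≤ ε * ‖x - x'‖ := by
    simpa [hg0, heig] using hs.norm_image_sub_le_of_norm_fderiv_le' hg hbound hx' hx
  calc (lam - ε) * ‖x - x'‖ ≤ |lam| * ‖x - x'‖ - ε * ‖x - x'‖ := by
        nlinarith [le_abs_self lam, norm_nonneg (x - x')]
    _ = ‖(g x + lam • (x - x')) - g x‖ - ε * ‖x - x'‖ := by
        rw [add_sub_cancel_left, norm_smul, Real.norm_eq_abs]
    _ ≤ ‖g x‖ := by linarith [norm_sub_le (g x + lam • (x - x')) (g x)]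

theorem stmt_2_general (n : ℕ) (u : EuclideanSpace ℝ (Fin n) → ℝ)
    (U : Set (EuclideanSpace ℝ (Fin n))) (hU : IsOpen U) (hUconv : Convex ℝ U)
    (hC2 : ContDiffOn ℝ 2 u U)
    (x' x : EuclideanSpace ℝ (Fin n)) (hx' : x' ∈ U) (hx : x ∈ U)
    (hgrad0 : gradient u x' = 0)
    (A : EuclideanSpace ℝ (Fin n) →L[ℝ] EuclideanSpace ℝ (Fin n))
    (lam Λ ε : ℝ)
    (heig : A (x - x') = -lam • (x - x')) (hA : ‖A‖ ≤ Λ)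
    (hHess : ∀ z ∈ segment ℝ x' x, ‖fderiv ℝ (gradient u) z - A‖ ≤ ε) :
    ‖gradient u x‖ ≥ (lam - ε * (1 + Λ)) * ‖x - x'‖ := by
  have hε : 0 ≤ ε := (norm_nonneg _).trans (hHess x (right_mem_segment ℝ x' x))
  have hΛ : 0 ≤ Λ := (norm_nonneg _).trans hA
  have hdiff : ∀ z ∈ segment ℝ x' x, DifferentiableAt ℝ (gradient u) z := fun z hz =>
    (hC2.contDiffAt (hU.mem_nhds (hUconv.segment_subset hx' hx hz))).differentiableAt_gradient
  have hbound := (convex_segment x' x).le_norm_of_norm_fderiv_sub_le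
    (left_mem_segment ℝ x' x) (right_mem_segment ℝ x' x) hgrad0 heig hdiff hHess
  nlinarith [mul_nonneg (mul_nonneg hε hΛ) (norm_nonneg (x - x'))]

/-- Gradient lower bound near a critical point whose Hessian is close to a
symmetric map `A` having `x - x'` as an eigenvector with eigenvalue `-λ`. -/
theorem stmt_2 (n : ℕ) (u : EuclideanSpace ℝ (Fin n) → ℝ)
    (U : Set (EuclideanSpace ℝ (Fin n))) (hU : IsOpen U) (hUconv : Convex ℝ U)
    (hC2 : ContDiffOn ℝ 2 u U)
    (x' x : EuclideanSpace ℝ (Fin n)) (hx' : x' ∈ U) (hx : x ∈ U) (hne : x ≠ x')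
    (hgrad0 : gradient u x' = 0)
    (A : EuclideanSpace ℝ (Fin n) →L[ℝ] EuclideanSpace ℝ (Fin n))
    (hAsymm : ∀ v w, ⟪A v, w⟫ = ⟪v, A w⟫)
    (lam Λ ε : ℝ) (hlam : 0 < lam)
    (heig : A (x - x') = -lam • (x - x')) (hA : ‖A‖ ≤ Λ)
    (hHess : ∀ z ∈ segment ℝ x' x, ‖fderiv ℝ (gradient u) z - A‖ ≤ ε)
    (hdir : ‖‖gradient u x‖⁻¹ • gradient u x + ‖x - x'‖⁻¹ • (x - x')‖ ≤ ε) :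
    ‖gradient u x‖ ≥ (lam - ε * (1 + Λ)) * ‖x - x'‖ :=
  stmt_2_general n u U hU hUconv hC2 x' x hx' hx hgrad0 A lam Λ ε heig hA hHess
end

section
/- Let u : ℝⁿ → ℝ be C² on B₁ with ‖∇²u‖_{L∞(B₁)} ≤ K, satisfying the Łojasiewicz inequality |u|^{1/2} ≤ β|∇u| on B₁. Let x : [0,s₀] → B₁ be a C¹ unit-speed integral curve of N = ∇u/|∇u| with u(x(0)) ≥ 0. Then x is C² on (0,s₀] and |x″(s)| ≤ 4β²K/s for all s ∈ (0,s₀]. -/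
/-!
Along the curve, `φ = u ∘ x` satisfies `φ' = |∇u(x)|`, so `φ` is nondecreasing and stays `≥ 0`,
and the Łojasiewicz inequality gives `(√φ)' ≥ 1 / (2β)` wherever `φ > 0`.

If `φ > 0` on `(0, s₀]`, integrating yields `√φ(s) ≥ s / (2β)`, hence `|∇u(x(s))| ≥ s / (2β²)`.
Then `x' = N ∘ x` with `N = ∇u / |∇u|` of class `C¹` near the curve, so `x` is `C²`, and
`x'' = DN(x) x'` has norm at most `2K / |∇u(x)| ≤ 4β²K / s`.

Otherwise `φ` has a last zero `a`. If `a < s₀`, then `a` is an interior minimum of `φ`, so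
`∇u(x(a)) = 0` and `x'(a) = 0`; hence `|∇u(x(t))| ≤ K |x(t) - x(a)| = o(t - a)`, contradicting the
growth `|∇u(x(t))| ≥ (t - a) / (2β²)` past `a`. So `φ ≡ 0`, the gradient vanishes along the curve,
and `x' ≡ 0`.
-/

open Metric Set Filter Topology Asymptotics
open scoped RealInnerProductSpace

section RealLine

variable {F : Type*} [NormedAddCommGroup F] [NormedSpace ℝ F]

/- An inequality only: `f` is pinned down just to the left of `s`, and `deriv f s` is the junk
value `0` when `f` is not differentiable at `s`. -/
theorem norm_deriv_le_of_eventuallyEq_nhdsLE {f h : ℝ → F} {s : ℝ} {A : F}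
    (hfh : f =ᶠ[𝓝[≤] s] h) (hh : HasDerivAt h A s) : ‖deriv f s‖ ≤ ‖A‖ := by
  by_cases hf : DifferentiableAt ℝ f s
  · have hA : HasDerivWithinAt f A (Iic s) s :=
      hh.hasDerivWithinAt.congr_of_eventuallyEq hfh (hfh.eq_of_nhdsWithin self_mem_Iic)
    rw [(uniqueDiffOn_Iic s s self_mem_Iic).eq_deriv _ hf.hasDerivAt.hasDerivWithinAt hA]
  · simp [deriv_zero_of_not_differentiableAt hf]

theorem deriv_deriv_eq_zero_of_hasDerivAt_zero {x : ℝ → F} {a b s : ℝ}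
    (hx : ∀ t ∈ Ioc a b, HasDerivAt x 0 t) (hs : s ∈ Ioc a b) : deriv (deriv x) s = 0 := by
  have hderiv : deriv x =ᶠ[𝓝[≤] s] fun _ => 0 := by
    filter_upwards [Ioc_mem_nhdsLE hs.1] with t ht using (hx t ⟨ht.1, ht.2.trans hs.2⟩).deriv
  simpa using norm_deriv_le_of_eventuallyEq_nhdsLE hderiv (hasDerivAt_const s (0 : F))

theorem HasDerivAt.eq_zero_of_eventuallyEq_const_nhdsLE {f : ℝ → F} {f' c : F} {s : ℝ}
    (hf : HasDerivAt f f' s) (hc : f =ᶠ[𝓝[≤] s] fun _ => c) : f' = 0 :=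
  (uniqueDiffOn_Iic s s self_mem_Iic).eq_deriv _ hf.hasDerivWithinAt
    ((hasDerivWithinAt_const s _ c).congr_of_eventuallyEq hc (hc.eq_of_nhdsWithin self_mem_Iic))

theorem HasDerivAt.le_of_forall_mul_sub_le {f : ℝ → ℝ} {f' a b c : ℝ} (hf : HasDerivAt f f' a)
    (hab : a < b) (h : ∀ t ∈ Ioc a b, c * (t - a) ≤ f t - f a) : c ≤ f' := by
  refine ge_of_tendsto (hf.tendsto_slope.mono_left (nhdsGT_le_nhdsNE a)) ?_
  filter_upwards [Ioc_mem_nhdsGT hab] with t ht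
  rw [slope_def_field, le_div_iff₀ (sub_pos.2 ht.1)]
  exact h t ht

theorem hasDerivAt_zero_of_norm_le_mul {G : Type*} [NormedAddCommGroup G] [NormedSpace ℝ G]
    {f : ℝ → F} {g : ℝ → G} {a K : ℝ} (hf : HasDerivAt f 0 a) (hga : g a = 0)
    (hg : ∀ᶠ t in 𝓝 a, ‖g t‖ ≤ K * ‖f t - f a‖) : HasDerivAt g 0 a := by
  rw [hasDerivAt_iff_isLittleO] at hf ⊢
  simp only [hga, smul_zero, sub_zero] at hf ⊢
  exact (IsBigO.of_bound K hg).trans_isLittleO hf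

theorem hasDerivAt_norm_comp_of_eq_zero {g : F → F} {x : ℝ → F} {U : Set F} {a K : ℝ}
    (hx : HasDerivAt x (‖g (x a)‖⁻¹ • g (x a)) a) (hga : g (x a) = 0) (hU : U ∈ 𝓝 (x a))
    (hLip : ∀ y ∈ U, ‖g y - g (x a)‖ ≤ K * ‖y - x a‖) :
    HasDerivAt (fun t => ‖g (x t)‖) 0 a := by
  have hx0 : HasDerivAt x 0 a := by simpa [hga] using hx
  refine hasDerivAt_zero_of_norm_le_mul hx0 (by simp [hga]) (K := K) ?_
  filter_upwards [hx0.continuousAt.preimage_mem_nhds hU] with t ht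
  simpa [hga] using hLip _ ht

theorem contDiffOn_succ_of_hasDerivAt {f v : ℝ → F} {I : Set ℝ} {n : ℕ}
    (hI : UniqueDiffOn ℝ I) (hf : ∀ t ∈ I, HasDerivAt f (v t) t) (hv : ContDiffOn ℝ n v I) :
    ContDiffOn ℝ (n + 1 : ℕ) f I := by
  rw [Nat.cast_succ, contDiffOn_succ_iff_derivWithin hI]
  refine ⟨fun t ht => (hf t ht).differentiableAt.differentiableWithinAt, by simp, ?_⟩
  exact hv.congr fun t ht => (hf t ht).hasDerivWithinAt.derivWithin (hI t ht)

theorem contDiffOn_succ_of_hasDerivAt_comp {N : F → F} {V : Set F} {x : ℝ → F} {I : Set ℝ}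
    {n : ℕ} (hI : UniqueDiffOn ℝ I) (hN : ContDiffOn ℝ n N V) (hxV : MapsTo x I V)
    (hx : ∀ t ∈ I, HasDerivAt x (N (x t)) t) : ContDiffOn ℝ (n + 1 : ℕ) x I := by
  induction n with
  | zero =>
    have hxc : ContinuousOn x I := fun t ht => (hx t ht).continuousAt.continuousWithinAt
    exact contDiffOn_succ_of_hasDerivAt hI hx (n := 0)
      (contDiffOn_zero.2 (hN.continuousOn.comp hxc hxV))
  | succ k ih =>
    have hxk := ih (hN.of_le (by norm_cast; omega))
    exact contDiffOn_succ_of_hasDerivAt hI hx (hN.comp hxk hxV)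

end RealLine

section Lojasiewicz

variable {φ ρ : ℝ → ℝ} {β : ℝ}

theorem monotoneOn_of_sqrt_le_mul_deriv (hβ : 0 < β) {a b : ℝ}
    (hφ : ∀ t ∈ Icc a b, HasDerivAt φ (ρ t) t) (hLoj : ∀ t ∈ Icc a b, √(φ t) ≤ β * ρ t) :
    MonotoneOn φ (Icc a b) := by
  refine monotoneOn_of_hasDerivWithinAt_nonneg (convex_Icc a b)
    (fun t ht => (hφ t ht).continuousAt.continuousWithinAt)
    (fun t ht => (hφ t (interior_subset ht)).hasDerivWithinAt) fun t ht => ?_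
  have := hLoj t (interior_subset ht)
  nlinarith [Real.sqrt_nonneg (φ t)]

theorem linear_growth_of_sqrt_le_mul_deriv (hβ : 0 < β) {a b : ℝ}
    (hφ : ∀ t ∈ Icc a b, HasDerivAt φ (ρ t) t) (hpos : ∀ t ∈ Ioc a b, 0 < φ t)
    (hLoj : ∀ t ∈ Icc a b, √(φ t) ≤ β * ρ t) :
    ∀ t ∈ Icc a b, (t - a) / (2 * β ^ 2) ≤ ρ t := by
  have hsqrt : ∀ t ∈ Ioo a b, HasDerivAt (fun t => √(φ t)) (ρ t / (2 * √(φ t))) t :=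
    fun t ht => (hφ t (Ioo_subset_Icc_self ht)).sqrt (hpos t (Ioo_subset_Ioc_self ht)).ne'
  have hslope : ∀ t ∈ interior (Icc a b), 1 / (2 * β) ≤ deriv (fun t => √(φ t)) t := by
    rw [interior_Icc]
    intro t ht
    have hs : 0 < √(φ t) := Real.sqrt_pos.2 (hpos t (Ioo_subset_Ioc_self ht))
    rw [(hsqrt t ht).deriv, div_le_div_iff₀ (by positivity) (by positivity)]
    nlinarith [hLoj t (Ioo_subset_Icc_self ht)]
  intro t ht
  have hgrow := (convex_Icc a b).mul_sub_le_image_sub_of_le_deriv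
    (fun t ht => (hφ t ht).continuousAt.sqrt.continuousWithinAt)
    (by rw [interior_Icc]; exact fun t ht => (hsqrt t ht).differentiableAt.differentiableWithinAt)
    hslope a (left_mem_Icc.2 (ht.1.trans ht.2)) t ht ht.1
  rw [div_le_iff₀ (by positivity)]
  calc t - a = 2 * β * (1 / (2 * β) * (t - a)) := by field_simp
    _ ≤ 2 * β * √(φ t) := by gcongr; linarith [Real.sqrt_nonneg (φ a)]
    _ ≤ 2 * β * (β * ρ t) := by gcongr; exact hLoj t ht
    _ = ρ t * (2 * β ^ 2) := by ring

theorem not_forall_pos_of_isLocalMin_of_hasDerivAt_zero (hβ : 0 < β) {a b : ℝ} (hab : a < b)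
    (hφ : ∀ t ∈ Icc a b, HasDerivAt φ (ρ t) t) (hLoj : ∀ t ∈ Icc a b, √(φ t) ≤ β * ρ t)
    (hmin : IsLocalMin φ a) (hflat : HasDerivAt ρ 0 a) : ¬ ∀ t ∈ Ioc a b, 0 < φ t := by
  intro hpos
  have hρa : ρ a = 0 := hmin.hasDerivAt_eq_zero (hφ a (left_mem_Icc.2 hab.le))
  have hgrow := linear_growth_of_sqrt_le_mul_deriv hβ hφ hpos hLoj
  have := hflat.le_of_forall_mul_sub_le hab (c := 1 / (2 * β ^ 2))
    fun t ht => by simpa [hρa, div_eq_inv_mul] using hgrow t (Ioc_subset_Icc_self ht)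
  exact absurd this (not_le.2 (by positivity))

theorem lojasiewicz_dichotomy (hβ : 0 < β) {s₀ : ℝ}
    (hφ : ∀ t ∈ Icc 0 s₀, HasDerivAt φ (ρ t) t) (h0 : 0 ≤ φ 0)
    (hLoj : ∀ t ∈ Icc 0 s₀, √(φ t) ≤ β * ρ t)
    (hflat : ∀ a ∈ Ioo 0 s₀, ρ a = 0 → HasDerivAt ρ 0 a) :
    (∀ t ∈ Icc 0 s₀, t / (2 * β ^ 2) ≤ ρ t) ∨ ∀ t ∈ Ioc 0 s₀, ρ t = 0 := by
  have hφc : ContinuousOn φ (Icc 0 s₀) := fun t ht => (hφ t ht).continuousAt.continuousWithinAt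
  have hmono : MonotoneOn φ (Icc 0 s₀) := monotoneOn_of_sqrt_le_mul_deriv hβ hφ hLoj
  have hnonneg : ∀ t ∈ Icc 0 s₀, 0 ≤ φ t := fun t ht =>
    h0.trans (hmono (left_mem_Icc.2 (ht.1.trans ht.2)) ht ht.1)
  by_cases hpos : ∀ t ∈ Ioc 0 s₀, 0 < φ t
  · left
    simpa using linear_growth_of_sqrt_le_mul_deriv hβ hφ hpos hLoj
  right
  push Not at hpos
  obtain ⟨σ, hσ, hφσ⟩ := hpos
  set Z := Icc 0 s₀ ∩ φ ⁻¹' {0}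
  have hZ : IsCompact Z := isCompact_Icc.of_isClosed_subset
    (hφc.preimage_isClosed_of_isClosed isClosed_Icc isClosed_singleton) inter_subset_left
  have hσZ : σ ∈ Z :=
    ⟨Ioc_subset_Icc_self hσ, le_antisymm hφσ (hnonneg σ (Ioc_subset_Icc_self hσ))⟩
  have haZ : sSup Z ∈ Z := hZ.sSup_mem ⟨σ, hσZ⟩
  have hφs₀ : φ s₀ = 0 := by
    set a := sSup Z
    have ha : 0 < a := hσ.1.trans_le (le_csSup hZ.bddAbove hσZ)
    obtain has | has := haZ.1.2.eq_or_lt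
    · simpa [has] using haZ.2
    have hmin : IsLocalMin φ a := by
      filter_upwards [Icc_mem_nhds ha has] with t ht
      rw [show φ a = 0 from haZ.2]
      exact hnonneg t ht
    have hρa : ρ a = 0 := hmin.hasDerivAt_eq_zero (hφ a haZ.1)
    refine absurd (fun t ht => ?_) (not_forall_pos_of_isLocalMin_of_hasDerivAt_zero hβ has
      (fun t ht => hφ t ⟨ha.le.trans ht.1, ht.2⟩) (fun t ht => hLoj t ⟨ha.le.trans ht.1, ht.2⟩)
      hmin (hflat a ⟨ha, has⟩ hρa))
    have htI : t ∈ Icc 0 s₀ := ⟨ha.le.trans ht.1.le, ht.2⟩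
    exact (hnonneg t htI).lt_of_ne fun h => ht.1.not_ge (le_csSup hZ.bddAbove ⟨htI, h.symm⟩)
  have hzero : ∀ t ∈ Icc 0 s₀, φ t = 0 := fun t ht =>
    le_antisymm (hφs₀ ▸ hmono ht (right_mem_Icc.2 (ht.1.trans ht.2)) ht.2) (hnonneg t ht)
  intro t ht
  refine (hφ t (Ioc_subset_Icc_self ht)).eq_zero_of_eventuallyEq_const_nhdsLE (c := 0) ?_
  filter_upwards [Icc_mem_nhdsLE ht.1] with r hr
  exact hzero r ⟨hr.1, hr.2.trans ht.2⟩

end Lojasiewicz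

section InnerProductSpace

variable {E : Type*} [NormedAddCommGroup E] [InnerProductSpace ℝ E]

theorem HasDerivAt.norm {γ : ℝ → E} {γ' : E} {s : ℝ} (hγ : HasDerivAt γ γ' s) (hs : γ s ≠ 0) :
    HasDerivAt (fun t => ‖γ t‖) (⟪γ s, γ'⟫ / ‖γ s‖) s := by
  have h := hγ.norm_sq.sqrt (by positivity)
  simp only [Real.sqrt_sq (norm_nonneg _)] at h
  convert h using 1
  ring

theorem HasDerivAt.inv_norm_smul {γ : ℝ → E} {γ' : E} {s : ℝ} (hγ : HasDerivAt γ γ' s)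
    (hs : γ s ≠ 0) :
    HasDerivAt (fun t => ‖γ t‖⁻¹ • γ t) (‖γ s‖⁻¹ • γ' - (⟪γ s, γ'⟫ / ‖γ s‖ ^ 3) • γ s) s := by
  refine (((hγ.norm hs).fun_inv (norm_ne_zero_iff.2 hs)).smul hγ).congr_deriv ?_
  rw [sub_eq_add_neg, ← neg_smul]
  congr 2
  field_simp

theorem norm_inv_norm_smul_sub_le (v w : E) :
    ‖‖v‖⁻¹ • w - (⟪v, w⟫ / ‖v‖ ^ 3) • v‖ ≤ 2 * ‖w‖ / ‖v‖ := by
  rcases eq_or_ne v 0 with rfl | hv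
  · simp
  have hv' : 0 < ‖v‖ := norm_pos_iff.2 hv
  calc ‖‖v‖⁻¹ • w - (⟪v, w⟫ / ‖v‖ ^ 3) • v‖
      ≤ ‖v‖⁻¹ * ‖w‖ + |⟪v, w⟫| / ‖v‖ ^ 3 * ‖v‖ := by
        refine (norm_sub_le _ _).trans_eq ?_
        rw [norm_smul, norm_smul, Real.norm_eq_abs, Real.norm_eq_abs, abs_div,
          abs_of_pos (inv_pos.2 hv'), abs_of_pos (by positivity : 0 < ‖v‖ ^ 3)]
    _ ≤ ‖v‖⁻¹ * ‖w‖ + ‖v‖ * ‖w‖ / ‖v‖ ^ 3 * ‖v‖ := by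
        gcongr; exact abs_real_inner_le_norm v w
    _ = 2 * ‖w‖ / ‖v‖ := by field_simp; ring

theorem ContDiffOn.inv_norm_smul {G : Type*} [NormedAddCommGroup G] [NormedSpace ℝ G]
    {g : G → E} {U : Set G} {n : WithTop ℕ∞} (hg : ContDiffOn ℝ n g U) (hU : IsOpen U) :
    ContDiffOn ℝ n (fun y => ‖g y‖⁻¹ • g y) (U ∩ {y | g y ≠ 0}) := fun _ hy =>
  have hgy := hg.contDiffAt (hU.mem_nhds hy.1)
  (((hgy.norm ℝ hy.2).inv (norm_ne_zero_iff.2 hy.2)).smul hgy).contDiffWithinAt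

theorem norm_deriv_deriv_le_of_hasDerivAt_normalized {g : E → E} {x : ℝ → E} {a b s K : ℝ}
    (hx : ∀ t ∈ Ioc a b, HasDerivAt x (‖g (x t)‖⁻¹ • g (x t)) t) (hs : s ∈ Ioc a b)
    (hg : DifferentiableAt ℝ g (x s)) (hK : ‖fderiv ℝ g (x s)‖ ≤ K) (hgs : g (x s) ≠ 0) :
    ‖deriv (deriv x) s‖ ≤ 2 * K / ‖g (x s)‖ := by
  set γ' := fderiv ℝ g (x s) (‖g (x s)‖⁻¹ • g (x s))
  have hγ : HasDerivAt (fun t => g (x t)) γ' s := hg.hasFDerivAt.comp_hasDerivAt s (hx s hs)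
  have hγ' : ‖γ'‖ ≤ K := by
    refine ((fderiv ℝ g (x s)).le_of_opNorm_le hK _).trans_eq ?_
    rw [norm_smul, norm_inv, norm_norm, inv_mul_cancel₀ (norm_ne_zero_iff.2 hgs), mul_one]
  have hderiv : deriv x =ᶠ[𝓝[≤] s] fun t => ‖g (x t)‖⁻¹ • g (x t) := by
    filter_upwards [Ioc_mem_nhdsLE hs.1] with t ht using (hx t ⟨ht.1, ht.2.trans hs.2⟩).deriv
  calc ‖deriv (deriv x) s‖ ≤ _ := norm_deriv_le_of_eventuallyEq_nhdsLE hderiv (hγ.inv_norm_smul hgs)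
    _ ≤ 2 * ‖γ'‖ / ‖g (x s)‖ := norm_inv_norm_smul_sub_le _ _
    _ ≤ 2 * K / ‖g (x s)‖ := by gcongr

variable [CompleteSpace E]

theorem ContDiffOn.gradient {u : E → ℝ} {U : Set E} {n : WithTop ℕ∞}
    (hu : ContDiffOn ℝ (n + 1) u U) (hU : IsOpen U) : ContDiffOn ℝ n (gradient u) U :=
  (InnerProductSpace.toDual ℝ E).symm.toContinuousLinearEquiv.contDiff.comp_contDiffOn
    (hu.fderiv_of_isOpen hU le_rfl)

theorem HasDerivAt.comp_of_normalized_gradient {u : E → ℝ} {x : ℝ → E} {t : ℝ}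
    (hx : HasDerivAt x (‖gradient u (x t)‖⁻¹ • gradient u (x t)) t)
    (hu : DifferentiableAt ℝ u (x t)) :
    HasDerivAt (fun s => u (x s)) ‖gradient u (x t)‖ t := by
  refine (hu.hasFDerivAt.comp_hasDerivAt t hx).congr_deriv ?_
  rw [← inner_gradient_left, real_inner_smul_right, real_inner_self_eq_norm_sq]
  rcases eq_or_ne ‖gradient u (x t)‖ 0 with h | h
  · simp [h]
  · field_simp

theorem norm_gradient_growth_or_eq_zero {u : E → ℝ} {U : Set E} {x : ℝ → E} {β K s₀ : ℝ}
    (hβ : 0 < β) (hU : IsOpen U) (hUc : Convex ℝ U) (hu : ContDiffOn ℝ 2 u U)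
    (hHess : ∀ z ∈ U, ‖fderiv ℝ (gradient u) z‖ ≤ K)
    (hLoj : ∀ y ∈ U, |u y| ^ ((1 : ℝ) / 2) ≤ β * ‖gradient u y‖)
    (hmem : ∀ s ∈ Icc 0 s₀, x s ∈ U)
    (hode : ∀ s ∈ Icc 0 s₀, HasDerivAt x (‖gradient u (x s)‖⁻¹ • gradient u (x s)) s)
    (h0 : 0 ≤ u (x 0)) :
    (∀ t ∈ Icc 0 s₀, t / (2 * β ^ 2) ≤ ‖gradient u (x t)‖) ∨
      ∀ t ∈ Ioc 0 s₀, gradient u (x t) = 0 := by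
  have hg : ContDiffOn ℝ 1 (gradient u) U := hu.gradient hU
  have hφ : ∀ t ∈ Icc 0 s₀, HasDerivAt (fun s => u (x s)) ‖gradient u (x t)‖ t := fun t ht =>
    (hode t ht).comp_of_normalized_gradient
      ((hu.contDiffAt (hU.mem_nhds (hmem t ht))).differentiableAt (by norm_num))
  have hLoj' : ∀ t ∈ Icc 0 s₀, √(u (x t)) ≤ β * ‖gradient u (x t)‖ := fun t ht =>
    (Real.sqrt_le_sqrt (le_abs_self _)).trans
      (by simpa [Real.sqrt_eq_rpow] using hLoj _ (hmem t ht))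
  have hflat : ∀ a ∈ Ioo 0 s₀, ‖gradient u (x a)‖ = 0 →
      HasDerivAt (fun t => ‖gradient u (x t)‖) 0 a := fun a ha hga =>
    have hxa := hmem a (Ioo_subset_Icc_self ha)
    hasDerivAt_norm_comp_of_eq_zero (hode a (Ioo_subset_Icc_self ha)) (norm_eq_zero.1 hga)
      (hU.mem_nhds hxa) fun _ hy => hUc.norm_image_sub_le_of_norm_fderiv_le
        (fun z hz => (hg.contDiffAt (hU.mem_nhds hz)).differentiableAt one_ne_zero) hHess hxa hy
  simpa only [norm_eq_zero] using lojasiewicz_dichotomy hβ hφ h0 hLoj' hflat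

end InnerProductSpace

theorem stmt_4_general (n : ℕ) (u : EuclideanSpace ℝ (Fin n) → ℝ) (β K : ℝ)
    (hβ : 0 < β) (hK : 0 < K)
    (hC2 : ContDiffOn ℝ 2 u (ball 0 1))
    (hHess : ∀ z ∈ ball (0 : EuclideanSpace ℝ (Fin n)) 1,
      ‖fderiv ℝ (gradient u) z‖ ≤ K)
    (hLoj : ∀ y ∈ ball (0 : EuclideanSpace ℝ (Fin n)) 1,
      |u y| ^ ((1 : ℝ) / 2) ≤ β * ‖gradient u y‖)
    (s₀ : ℝ) (x : ℝ → EuclideanSpace ℝ (Fin n))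
    (hmem : ∀ s ∈ Icc 0 s₀, x s ∈ ball (0 : EuclideanSpace ℝ (Fin n)) 1)
    (hode : ∀ s ∈ Icc 0 s₀,
      HasDerivAt x (‖gradient u (x s)‖⁻¹ • gradient u (x s)) s)
    (h0 : 0 ≤ u (x 0)) :
    ContDiffOn ℝ 2 x (Ioc 0 s₀) ∧
    ∀ s ∈ Ioc 0 s₀, ‖deriv (deriv x) s‖ ≤ 4 * β ^ 2 * K / s := by
  have hg : ContDiffOn ℝ 1 (gradient u) (ball 0 1) := hC2.gradient isOpen_ball
  have hode' : ∀ t ∈ Ioc 0 s₀, HasDerivAt x (‖gradient u (x t)‖⁻¹ • gradient u (x t)) t :=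
    fun t ht => hode t (Ioc_subset_Icc_self ht)
  rcases norm_gradient_growth_or_eq_zero hβ isOpen_ball (convex_ball 0 1) hC2 hHess hLoj hmem
    hode h0 with hgrow | hcrit
  · have hgx : ∀ t ∈ Ioc 0 s₀, gradient u (x t) ≠ 0 := fun t ht => norm_pos_iff.1 <|
      (div_pos ht.1 (by positivity)).trans_le (hgrow t (Ioc_subset_Icc_self ht))
    refine ⟨contDiffOn_succ_of_hasDerivAt_comp (n := 1) (uniqueDiffOn_Ioc 0 s₀)
      (hg.inv_norm_smul isOpen_ball) (fun t ht => ⟨hmem t (Ioc_subset_Icc_self ht), hgx t ht⟩)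
      hode', fun s hs => ?_⟩
    have hxs := hmem s (Ioc_subset_Icc_self hs)
    calc ‖deriv (deriv x) s‖ ≤ 2 * K / ‖gradient u (x s)‖ :=
          norm_deriv_deriv_le_of_hasDerivAt_normalized hode' hs
            ((hg.contDiffAt (isOpen_ball.mem_nhds hxs)).differentiableAt one_ne_zero)
            (hHess _ hxs) (hgx s hs)
      _ ≤ 2 * K / (s / (2 * β ^ 2)) := div_le_div_of_nonneg_left (by positivity)
          (div_pos hs.1 (by positivity)) (hgrow s (Ioc_subset_Icc_self hs))
      _ = 4 * β ^ 2 * K / s := by field_simp; ring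
  · have hode0 : ∀ t ∈ Ioc 0 s₀, HasDerivAt x 0 t := fun t ht => by
      simpa [hcrit t ht] using hode' t ht
    refine ⟨contDiffOn_succ_of_hasDerivAt (n := 1) (uniqueDiffOn_Ioc 0 s₀) hode0
      contDiffOn_const, fun s hs => ?_⟩
    rw [deriv_deriv_eq_zero_of_hasDerivAt_zero hode0 hs, norm_zero]
    have := hs.1
    positivity

/-- Second-derivative estimate along unit-speed integral curves of the
normalized gradient: `|x''(s)| ≤ 4β²K/s`. -/
theorem stmt_4 (n : ℕ) (u : EuclideanSpace ℝ (Fin n) → ℝ) (β K : ℝ)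
    (hβ : 0 < β) (hK : 0 < K)
    (hC2 : ContDiffOn ℝ 2 u (ball 0 1))
    (hHess : ∀ z ∈ ball (0 : EuclideanSpace ℝ (Fin n)) 1,
      ‖fderiv ℝ (gradient u) z‖ ≤ K)
    (hLoj : ∀ y ∈ ball (0 : EuclideanSpace ℝ (Fin n)) 1,
      |u y| ^ ((1 : ℝ) / 2) ≤ β * ‖gradient u y‖)
    (s₀ : ℝ) (hs₀ : 0 < s₀) (x : ℝ → EuclideanSpace ℝ (Fin n))
    (hmem : ∀ s ∈ Icc 0 s₀, x s ∈ ball (0 : EuclideanSpace ℝ (Fin n)) 1)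
    (hode : ∀ s ∈ Icc 0 s₀,
      HasDerivAt x (‖gradient u (x s)‖⁻¹ • gradient u (x s)) s)
    (h0 : 0 ≤ u (x 0)) :
    ContDiffOn ℝ 2 x (Ioc 0 s₀) ∧
    ∀ s ∈ Ioc 0 s₀, ‖deriv (deriv x) s‖ ≤ 4 * β ^ 2 * K / s :=
  stmt_4_general n u β K hβ hK hC2 hHess hLoj s₀ x hmem hode h0
end

section
/- Let u : ℝⁿ → ℝ be continuous on the closed unit ball, C¹ with Lipschitz gradient on the open ball, with u(0) = 0, satisfying |u|^{1/2} ≤ β|∇u| on B₁. Suppose 0 is a saddle point in the sense that there is a sequence pᵢ → 0 with u(pᵢ) > 0. Then there exist δ > 0 and a curve x ∈ C([0,δ]) ∩ C¹_loc((0,δ]) with x(0) = 0, x′(s) = ∇u(x(s))/|∇u(x(s))| for 0 < s ≤ δ, u(x(s)) > 0 for s ∈ (0,δ], and |x(s)| ≤ 2β·sqrt(u(x(s))) for all s ∈ [0,δ]. -/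
/-!
Along a solution of `x' = ∇u / ‖∇u‖` the function `u` grows at rate `‖∇u‖`, so the Łojasiewicz
inequality gives `(√(u ∘ x))' ≥ 1 / (2β)`. Flowing from the points `pᵢ`, where `u > 0` and hence
`∇u ≠ 0`, yields unit-speed curves with `√(u (xᵢ s)) ≥ s / (2β)` and `‖xᵢ s - pᵢ‖ ≤ s`. By
Arzelà–Ascoli a subsequence converges to a curve from `0` obeying both bounds. Since `u > 0` on it
for `s > 0`, the normalized gradient is continuous along the limit, so the limit is again a
solution.
-/

open Metric Set Filter Topology

section Normalize

variable {F : Type*} [NormedAddCommGroup F] [NormedSpace ℝ F]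

noncomputable def truncNormalize (c : ℝ) (v : F) : F := (max ‖v‖ c)⁻¹ • v

lemma norm_truncNormalize_le {c : ℝ} (hc : 0 < c) (v : F) : ‖truncNormalize c v‖ ≤ 1 := by
  have hm : 0 < max ‖v‖ c := lt_max_of_lt_right hc
  rw [truncNormalize, norm_smul, norm_inv, Real.norm_of_nonneg hm.le, inv_mul_le_one₀ hm]
  exact le_max_left _ _

lemma truncNormalize_of_le {c : ℝ} {v : F} (h : c ≤ ‖v‖) :
    truncNormalize c v = ‖v‖⁻¹ • v := by
  rw [truncNormalize, max_eq_left h]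

lemma lipschitzWith_truncNormalize {c : ℝ} (hc : 0 < c) :
    LipschitzWith (2 / c).toNNReal (truncNormalize (F := F) c) := by
  refine LipschitzWith.of_dist_le' fun v w => ?_
  wlog h : max ‖w‖ c ≤ max ‖v‖ c generalizing v w
  · rw [dist_comm, dist_comm v]
    exact this w v (le_of_not_ge h)
  set mv := max ‖v‖ c
  set mw := max ‖w‖ c
  have hmv : c ≤ mv := le_max_right _ _
  have hmw : c ≤ mw := le_max_right _ _
  have hw : ‖w‖ ≤ mw := le_max_left _ _
  have hgap : mv - mw ≤ ‖v - w‖ :=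
    (le_abs_self _).trans ((abs_max_sub_max_le_abs _ _ _).trans (abs_norm_sub_norm_le v w))
  have hinv : mv⁻¹ ≤ mw⁻¹ := inv_anti₀ (hc.trans_le hmw) h
  have hsplit : truncNormalize c v - truncNormalize c w = mv⁻¹ • (v - w) - (mw⁻¹ - mv⁻¹) • w := by
    simp only [truncNormalize, mv, mw]; module
  have hfirst : mv⁻¹ * ‖v - w‖ ≤ c⁻¹ * ‖v - w‖ := by gcongr
  have hsecond : (mw⁻¹ - mv⁻¹) * ‖w‖ ≤ c⁻¹ * ‖v - w‖ :=
    calc (mw⁻¹ - mv⁻¹) * ‖w‖ ≤ (mw⁻¹ - mv⁻¹) * mw := by gcongr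
      _ = (mv - mw) / mv := by field_simp [(hc.trans_le hmw).ne', (hc.trans_le hmv).ne']
      _ ≤ ‖v - w‖ / c := by gcongr
      _ = c⁻¹ * ‖v - w‖ := by ring
  rw [dist_eq_norm, hsplit, dist_eq_norm]
  calc ‖mv⁻¹ • (v - w) - (mw⁻¹ - mv⁻¹) • w‖
      ≤ ‖mv⁻¹ • (v - w)‖ + ‖(mw⁻¹ - mv⁻¹) • w‖ := norm_sub_le _ _
    _ = mv⁻¹ * ‖v - w‖ + (mw⁻¹ - mv⁻¹) * ‖w‖ := by
        rw [norm_smul, norm_smul, Real.norm_of_nonneg (by positivity),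
          Real.norm_of_nonneg (sub_nonneg.2 hinv)]
    _ ≤ c⁻¹ * ‖v - w‖ + c⁻¹ * ‖v - w‖ := add_le_add hfirst hsecond
    _ = 2 / c * ‖v - w‖ := by ring

end Normalize

section Limits

variable {F : Type*} [NormedAddCommGroup F] [NormedSpace ℝ F]

lemma norm_sub_sub_smul_le_of_hasDerivWithinAt {f f' : ℝ → F} {v : F} {s t ε : ℝ}
    (hf : ∀ τ ∈ uIcc s t, HasDerivWithinAt f (f' τ) (uIcc s t) τ)
    (hε : ∀ τ ∈ uIcc s t, ‖f' τ - v‖ ≤ ε) :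
    ‖f t - f s - (t - s) • v‖ ≤ ε * |t - s| := by
  have hg : ∀ τ ∈ uIcc s t,
      HasDerivWithinAt (fun τ => f τ - τ • v) (f' τ - v) (uIcc s t) τ := fun τ hτ => by
    have := (hf τ hτ).sub ((hasDerivWithinAt_id τ _).smul_const v)
    rwa [one_smul] at this
  have := convex_uIcc s t |>.norm_image_sub_le_of_norm_hasDerivWithin_le hg hε
    left_mem_uIcc right_mem_uIcc
  rw [Real.norm_eq_abs] at this
  convert this using 2
  rw [sub_smul]
  abel

lemma hasDerivWithinAt_of_tendsto {V : F → F} {C : ℝ} (hV : ∀ w, ‖V w‖ ≤ C)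
    {D : Set ℝ} (hD : Convex ℝ D) {X : ℕ → ℝ → F} {x : ℝ → F}
    (hX : ∀ m, ∀ t ∈ D, HasDerivWithinAt (X m) (V (X m t)) D t)
    (hlim : ∀ t ∈ D, Tendsto (fun m => X m t) atTop (𝓝 (x t)))
    {s : ℝ} (hs : s ∈ D) (hVs : ContinuousAt V (x s)) :
    HasDerivWithinAt x (V (x s)) D s := by
  rw [hasDerivWithinAt_iff_isLittleO, Asymptotics.isLittleO_iff]
  intro ε hε
  obtain ⟨ρ, hρ, hVρ⟩ := Metric.continuousAt_iff.1 hVs ε hε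
  have hnear : ∀ᶠ t in 𝓝[D] s, C * |t - s| < ρ / 2 := by
    refine nhdsWithin_le_nhds (ContinuousAt.eventually_lt (by fun_prop) continuousAt_const ?_)
    simpa using half_pos hρ
  filter_upwards [hnear, self_mem_nhdsWithin] with t ht htD
  have hsub : uIcc s t ⊆ D := hD.ordConnected.uIcc_subset hs htD
  have hm : ∀ᶠ m in atTop, ‖X m t - X m s - (t - s) • V (x s)‖ ≤ ε * ‖t - s‖ := by
    filter_upwards [(hlim s hs).eventually (ball_mem_nhds _ (half_pos hρ))] with m hm
    refine norm_sub_sub_smul_le_of_hasDerivWithinAt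
      (fun τ hτ => (hX m τ (hsub hτ)).mono hsub) fun τ hτ => ?_
    have hτs : ‖X m τ - X m s‖ ≤ C * |t - s| :=
      (hD.norm_image_sub_le_of_norm_hasDerivWithin_le (hX m) (fun w _ => hV _) hs (hsub hτ)).trans
        (mul_le_mul_of_nonneg_left (abs_sub_left_of_mem_uIcc hτ) ((norm_nonneg _).trans (hV 0)))
    rw [← dist_eq_norm]
    refine (hVρ ?_).le
    calc dist (X m τ) (x s) ≤ dist (X m τ) (X m s) + dist (X m s) (x s) := dist_triangle _ _ _
      _ < ρ := by rw [dist_eq_norm]; linarith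
  exact le_of_tendsto ((((hlim t htD).sub (hlim s hs)).sub tendsto_const_nhds).norm) hm

lemma exists_subseq_tendsto_of_lipschitzOnWith {α : Type*} [MetricSpace α]
    {X : ℕ → ℝ → α} {a b : ℝ} (hab : a ≤ b) {K : NNReal}
    (hX : ∀ m, LipschitzOnWith K (X m) (Icc a b)) {S : Set α} (hS : IsCompact S)
    (hXS : ∀ m, MapsTo (X m) (Icc a b) S) :
    ∃ φ : ℕ → ℕ, StrictMono φ ∧ ∃ x : ℝ → α, Continuous x ∧
      ∀ s ∈ Icc a b, Tendsto (fun m => X (φ m) s) atTop (𝓝 (x s)) := by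
  have : CompactSpace (Icc a b) := isCompact_iff_compactSpace.mp isCompact_Icc
  let A : Set (BoundedContinuousFunction (Icc a b) α) := {f | LipschitzWith K f ∧ ∀ s, f s ∈ S}
  have hA : Equicontinuous ((↑) : A → Icc a b → α) :=
    (LipschitzWith.uniformEquicontinuous _ K fun f => f.2.1).equicontinuous
  have hXA : ∀ m, BoundedContinuousFunction.mkOfCompact ⟨_, (hX m).to_restrict.continuous⟩ ∈ A :=
    fun m => ⟨(hX m).to_restrict, fun s => hXS m s.2⟩
  obtain ⟨f, -, φ, hφ, hconv⟩ := (BoundedContinuousFunction.arzela_ascoli S hS A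
    (fun f s hf => hf.2 s) hA).tendsto_subseq fun m => subset_closure (hXA m)
  refine ⟨φ, hφ, fun s => f (projIcc a b hab s), f.continuous.comp continuous_projIcc,
    fun s hs => ?_⟩
  show Tendsto _ _ (𝓝 (f (projIcc a b hab s)))
  rw [projIcc_of_mem hab hs]
  exact ((continuous_eval_const (⟨s, hs⟩ : Icc a b)).tendsto f).comp hconv

end Limits

section GradientFlow

open scoped InnerProductSpace

variable {E : Type*} [NormedAddCommGroup E] [InnerProductSpace ℝ E]

lemma inner_truncNormalize_self_nonneg (c : ℝ) (v : E) : 0 ≤ ⟪v, truncNormalize c v⟫_ℝ := by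
  rw [truncNormalize, real_inner_smul_right, real_inner_self_eq_norm_mul_norm]
  have : 0 ≤ max ‖v‖ c := (norm_nonneg v).trans (le_max_left _ _)
  positivity

variable [CompleteSpace E] {u : E → ℝ} {U : Set E}

noncomputable def normalizedGradient (u : E → ℝ) (y : E) : E := ‖gradient u y‖⁻¹ • gradient u y

lemma norm_normalizedGradient_le (u : E → ℝ) (y : E) : ‖normalizedGradient u y‖ ≤ 1 := by
  rw [normalizedGradient, norm_smul, norm_inv, norm_norm]
  exact inv_mul_le_one_of_le₀ le_rfl (norm_nonneg _)

lemma inner_gradient_normalizedGradient (u : E → ℝ) (y : E) :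
    ⟪gradient u y, normalizedGradient u y⟫_ℝ = ‖gradient u y‖ := by
  rcases eq_or_ne (gradient u y) 0 with h | h
  · simp [normalizedGradient, h]
  · rw [normalizedGradient, real_inner_smul_right, real_inner_self_eq_norm_mul_norm]
    field_simp

lemma DifferentiableAt.hasDerivAt_comp_gradient {y : ℝ → E} {v : E} {t : ℝ}
    (hu : DifferentiableAt ℝ u (y t)) (hy : HasDerivAt y v t) :
    HasDerivAt (fun s => u (y s)) ⟪gradient u (y t), v⟫_ℝ t :=
  hu.hasGradientAt.hasFDerivAt.comp_hasDerivAt t hy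

variable {β : ℝ}

lemma continuousAt_normalizedGradient (hU : IsOpen U) {L : NNReal}
    (hLip : LipschitzOnWith L (gradient u) U)
    (hLoj : ∀ y ∈ U, √(u y) ≤ β * ‖gradient u y‖) {y : E} (hy : y ∈ U) (hpos : 0 < u y) :
    ContinuousAt (normalizedGradient u) y := by
  have hg : ContinuousAt (gradient u) y := hLip.continuousOn.continuousAt (hU.mem_nhds hy)
  have hne : gradient u y ≠ 0 := by
    intro h
    have := hLoj y hy
    rw [h, norm_zero, mul_zero] at this
    exact (Real.sqrt_pos.2 hpos).not_ge this
  exact (hg.norm.inv₀ (norm_ne_zero_iff.2 hne)).smul hg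

lemma hasDerivAt_comp_of_mem_Ioo (hU : IsOpen U) (hC1 : DifferentiableOn ℝ u U)
    {y y' : ℝ → E} {T : ℝ} (hy : ∀ t ∈ Icc 0 T, HasDerivWithinAt y (y' t) (Icc 0 T) t)
    (hyU : MapsTo y (Icc 0 T) U) {t : ℝ} (ht : t ∈ Ioo 0 T) :
    HasDerivAt (fun s => u (y s)) ⟪gradient u (y t), y' t⟫_ℝ t :=
  (hC1.differentiableAt (hU.mem_nhds (hyU (Ioo_subset_Icc_self ht)))).hasDerivAt_comp_gradient
    ((hy t (Ioo_subset_Icc_self ht)).hasDerivAt (Icc_mem_nhds ht.1 ht.2))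

lemma monotoneOn_comp_of_inner_gradient_nonneg (hU : IsOpen U) (hC1 : DifferentiableOn ℝ u U)
    {y y' : ℝ → E} {T : ℝ} (hy : ∀ t ∈ Icc 0 T, HasDerivWithinAt y (y' t) (Icc 0 T) t)
    (hyU : MapsTo y (Icc 0 T) U) (hnonneg : ∀ t ∈ Ioo 0 T, 0 ≤ ⟪gradient u (y t), y' t⟫_ℝ) :
    MonotoneOn (fun t => u (y t)) (Icc 0 T) := by
  refine monotoneOn_of_hasDerivWithinAt_nonneg (f' := fun t => ⟪gradient u (y t), y' t⟫_ℝ)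
    (convex_Icc 0 T) (hC1.continuousOn.comp (fun t ht => (hy t ht).continuousWithinAt) hyU)
    (fun t ht => ?_) (by simpa using hnonneg)
  rw [interior_Icc] at ht ⊢
  exact (hasDerivAt_comp_of_mem_Ioo hU hC1 hy hyU ht).hasDerivWithinAt

lemma sqrt_add_div_le_sqrt_of_normalizedGradient_flow (hU : IsOpen U)
    (hC1 : DifferentiableOn ℝ u U) (hβ : 0 < β)
    (hLoj : ∀ y ∈ U, √(u y) ≤ β * ‖gradient u y‖) {y : ℝ → E} {T : ℝ}
    (hy : ∀ t ∈ Icc 0 T, HasDerivWithinAt y (normalizedGradient u (y t)) (Icc 0 T) t)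
    (hyU : MapsTo y (Icc 0 T) U) (h0 : 0 < u (y 0)) :
    ∀ t ∈ Icc 0 T, √(u (y 0)) + t / (2 * β) ≤ √(u (y t)) := by
  have hmono := monotoneOn_comp_of_inner_gradient_nonneg hU hC1 hy hyU fun t _ => by
    rw [inner_gradient_normalizedGradient]; exact norm_nonneg _
  have hpos : ∀ t ∈ Icc 0 T, 0 < u (y t) := fun t ht =>
    h0.trans_le (hmono ⟨le_rfl, ht.1.trans ht.2⟩ ht ht.1)
  have hderiv : ∀ t ∈ Ioo 0 T, HasDerivAt (fun s => √(u (y s)))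
      (‖gradient u (y t)‖ / (2 * √(u (y t)))) t := fun t ht => by
    have := (hasDerivAt_comp_of_mem_Ioo hU hC1 hy hyU ht).sqrt (hpos t (Ioo_subset_Icc_self ht)).ne'
    rwa [inner_gradient_normalizedGradient] at this
  have hslope : ∀ t ∈ Ioo 0 T, 1 / (2 * β) ≤ ‖gradient u (y t)‖ / (2 * √(u (y t))) := by
    intro t ht
    have hsqrt := Real.sqrt_pos.2 (hpos t (Ioo_subset_Icc_self ht))
    rw [div_le_div_iff₀ (by positivity) (by positivity)]
    nlinarith [hLoj (y t) (hyU (Ioo_subset_Icc_self ht))]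
  intro t ht
  have := (convex_Icc 0 T).mul_sub_le_image_sub_of_le_deriv (f := fun s => √(u (y s)))
    (hC1.continuousOn.comp (fun t ht => (hy t ht).continuousWithinAt) hyU).sqrt
    (fun t ht => (hderiv t (by rwa [interior_Icc] at ht)).differentiableAt.differentiableWithinAt)
    (fun t ht => by rw [interior_Icc] at ht; rw [(hderiv t ht).deriv]; exact hslope t ht)
    0 ⟨le_rfl, ht.1.trans ht.2⟩ t ht ht.1
  rw [sub_zero, one_div_mul_eq_div] at this
  linarith

lemma exists_normalizedGradient_flow (hU : IsOpen U) (hC1 : DifferentiableOn ℝ u U) {L : NNReal}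
    (hLip : LipschitzOnWith L (gradient u) U) (hβ : 0 < β)
    (hLoj : ∀ y ∈ U, √(u y) ≤ β * ‖gradient u y‖) {z : E} (hz : 0 < u z) {T : ℝ} (hT : 0 ≤ T)
    (hzT : closedBall z T ⊆ U) :
    ∃ y : ℝ → E, y 0 = z ∧
      (∀ t ∈ Icc 0 T, HasDerivWithinAt y (normalizedGradient u (y t)) (Icc 0 T) t) ∧
      ∀ t ∈ Icc 0 T, √(u z) + t / (2 * β) ≤ √(u (y t)) := by
  set c := √(u z) / β
  -- `normalizedGradient u` is Lipschitz only where `∇u` stays away from `0`, so we first solve the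
  -- ODE for the field truncated at `c`; it agrees with `normalizedGradient u` along the solution,
  -- on which `u ≥ u z` and hence `‖∇u‖ ≥ c`.
  have hc : 0 < c := div_pos (Real.sqrt_pos.2 hz) hβ
  have hPL : IsPicardLindelof (fun _ w => truncNormalize c (gradient u w)) (tmin := 0) (tmax := T)
      ⟨0, le_rfl, hT⟩ z T.toNNReal 0 1 ((2 / c).toNNReal * L) := by
    refine ⟨fun _ _ => ?_, fun _ _ => continuousOn_const,
      fun _ _ _ _ => norm_truncNormalize_le hc _, by simp [hT]⟩
    exact (lipschitzWith_truncNormalize hc).comp_lipschitzOnWith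
      (hLip.mono (by rwa [Real.coe_toNNReal _ hT]))
  obtain ⟨y, hy0, hy⟩ := hPL.exists_eq_forall_mem_Icc_hasDerivWithinAt₀
  have hyU : MapsTo y (Icc 0 T) U := fun t ht => hzT <| by
    have := (convex_Icc 0 T).norm_image_sub_le_of_norm_hasDerivWithin_le hy
      (fun t _ => norm_truncNormalize_le hc _) ⟨le_rfl, hT⟩ ht
    rw [mem_closedBall, dist_eq_norm, ← hy0]
    simp only [one_mul, sub_zero, Real.norm_of_nonneg ht.1] at this
    exact this.trans ht.2
  have hmono := monotoneOn_comp_of_inner_gradient_nonneg hU hC1 hy hyU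
    fun t _ => inner_truncNormalize_self_nonneg _ _
  have hy' : ∀ t ∈ Icc 0 T, HasDerivWithinAt y (normalizedGradient u (y t)) (Icc 0 T) t := by
    intro t ht
    have hut : u z ≤ u (y t) := hy0 ▸ hmono ⟨le_rfl, hT⟩ ht ht.1
    have hct : c ≤ ‖gradient u (y t)‖ := by
      rw [div_le_iff₀' hβ]
      exact (Real.sqrt_le_sqrt hut).trans (hLoj _ (hyU ht))
    have := hy t ht
    rwa [truncNormalize_of_le hct] at this
  refine ⟨y, hy0, hy', ?_⟩
  simpa only [hy0] using
    sqrt_add_div_le_sqrt_of_normalizedGradient_flow hU hC1 hβ hLoj hy' hyU (hy0 ▸ hz)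

end GradientFlow

section Saddle

variable {E : Type*} [NormedAddCommGroup E] [InnerProductSpace ℝ E] [ProperSpace E]
  {u : E → ℝ} {β : ℝ}

lemma exists_normalizedGradient_curve_of_tendsto (hC1 : DifferentiableOn ℝ u (ball 0 1))
    {L : NNReal} (hLip : LipschitzOnWith L (gradient u) (ball 0 1)) (hβ : 0 < β)
    (hLoj : ∀ y ∈ ball (0 : E) 1, √(u y) ≤ β * ‖gradient u y‖) {q : ℕ → E}
    (hq : Tendsto q atTop (𝓝 0)) (hq4 : ∀ m, ‖q m‖ ≤ 1 / 4) (hqpos : ∀ m, 0 < u (q m)) :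
    ∃ x : ℝ → E, Continuous x ∧ x 0 = 0 ∧
      (∀ s ∈ Icc (0 : ℝ) (1 / 4), ‖x s‖ ≤ s ∧ s / (2 * β) ≤ √(u (x s))) ∧
      ∀ s ∈ Ioo (0 : ℝ) (1 / 4), 0 < u (x s) ∧ HasDerivAt x (normalizedGradient u (x s)) s := by
  have hball : ∀ m, closedBall (q m) (1 / 4) ⊆ ball 0 1 := fun m w hw => by
    rw [mem_closedBall, dist_eq_norm] at hw
    rw [mem_ball_zero_iff]
    linarith [norm_sub_norm_le w (q m), hq4 m]
  choose X hX0 hXflow hXsqrt using fun m => exists_normalizedGradient_flow isOpen_ball hC1 hLip hβ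
    hLoj (hqpos m) (by norm_num) (hball m)
  have hXlip : ∀ m, LipschitzOnWith 1 (X m) (Icc 0 (1 / 4)) := fun m =>
    (convex_Icc _ _).lipschitzOnWith_of_nnnorm_hasDerivWithin_le (hXflow m) fun t _ => by
      simpa [← NNReal.coe_le_coe] using norm_normalizedGradient_le u (X m t)
  have hXdist : ∀ m, ∀ s ∈ Icc (0 : ℝ) (1 / 4), dist (X m s) (q m) ≤ s := fun m s hs => by
    simpa [hX0, Real.dist_eq, abs_of_nonneg hs.1] using
      (hXlip m).dist_le_mul s hs 0 ⟨le_rfl, by norm_num⟩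
  have hXS : ∀ m, MapsTo (X m) (Icc 0 (1 / 4)) (closedBall 0 (1 / 2)) := fun m s hs => by
    rw [mem_closedBall, dist_zero_right]
    linarith [norm_le_norm_add_norm_sub' (X m s) (q m), hq4 m, hs.2, dist_eq_norm (X m s) (q m),
      hXdist m s hs]
  obtain ⟨φ, hφ, x, hxc, hlim⟩ :=
    exists_subseq_tendsto_of_lipschitzOnWith (by norm_num) hXlip (isCompact_closedBall _ _) hXS
  have hqφ : Tendsto (fun m => q (φ m)) atTop (𝓝 0) := hq.comp hφ.tendsto_atTop
  have hnorm : ∀ s ∈ Icc (0 : ℝ) (1 / 4), ‖x s‖ ≤ s := fun s hs => by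
    simpa using le_of_tendsto' ((hlim s hs).dist hqφ) fun m => hXdist (φ m) s hs
  have hxU : ∀ s ∈ Icc (0 : ℝ) (1 / 4), x s ∈ ball (0 : E) 1 := fun s hs => by
    rw [mem_ball_zero_iff]
    linarith [hnorm s hs, hs.2]
  have hsqrt : ∀ s ∈ Icc (0 : ℝ) (1 / 4), s / (2 * β) ≤ √(u (x s)) := fun s hs =>
    ge_of_tendsto ((hC1.continuousOn.continuousAt (isOpen_ball.mem_nhds (hxU s hs))).tendsto.comp
      (hlim s hs)).sqrt <| Eventually.of_forall fun m =>
        (le_add_of_nonneg_left (Real.sqrt_nonneg _)).trans (hXsqrt (φ m) s hs)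
  refine ⟨x, hxc,
    tendsto_nhds_unique (hlim 0 ⟨le_rfl, by norm_num⟩) (by simpa only [hX0] using hqφ),
    fun s hs => ⟨hnorm s hs, hsqrt s hs⟩, fun s hs => ?_⟩
  have hpos : 0 < u (x s) := Real.sqrt_pos.1 <|
    (div_pos hs.1 (by positivity)).trans_le (hsqrt s (Ioo_subset_Icc_self hs))
  refine ⟨hpos, (hasDerivWithinAt_of_tendsto (norm_normalizedGradient_le u) (convex_Icc 0 (1 / 4))
    (fun m => hXflow (φ m)) hlim (Ioo_subset_Icc_self hs) ?_).hasDerivAt (Icc_mem_nhds hs.1 hs.2)⟩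
  exact continuousAt_normalizedGradient isOpen_ball hLip hLoj (hxU s (Ioo_subset_Icc_self hs)) hpos

end Saddle

theorem stmt_5_general (n : ℕ) (u : EuclideanSpace ℝ (Fin n) → ℝ) (β : ℝ) (L : NNReal)
    (hβ : 0 < β)
    (hC1 : DifferentiableOn ℝ u (ball 0 1))
    (hLip : LipschitzOnWith L (gradient u) (ball 0 1))
    (hLoj : ∀ y ∈ ball (0 : EuclideanSpace ℝ (Fin n)) 1,
      |u y| ^ ((1 : ℝ) / 2) ≤ β * ‖gradient u y‖)
    (p : ℕ → EuclideanSpace ℝ (Fin n))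
    (hp : Filter.Tendsto p Filter.atTop (nhds 0))
    (hppos : ∀ i, 0 < u (p i)) :
    ∃ δ > (0 : ℝ), ∃ x : ℝ → EuclideanSpace ℝ (Fin n),
      ContinuousOn x (Icc 0 δ) ∧
      ContinuousOn (deriv x) (Ioc 0 δ) ∧
      x 0 = 0 ∧
      (∀ s ∈ Ioc 0 δ,
        HasDerivAt x (‖gradient u (x s)‖⁻¹ • gradient u (x s)) s ∧ 0 < u (x s)) ∧
      (∀ s ∈ Icc 0 δ, x s ∈ closedBall (0 : EuclideanSpace ℝ (Fin n)) 1 ∧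
        ‖x s‖ ≤ 2 * β * Real.sqrt (u (x s))) := by
  have hLoj' : ∀ y ∈ ball (0 : EuclideanSpace ℝ (Fin n)) 1, √(u y) ≤ β * ‖gradient u y‖ :=
    fun y hy => by
      rcases le_or_gt 0 (u y) with h | h
      · simpa [abs_of_nonneg h, Real.sqrt_eq_rpow] using hLoj y hy
      · rw [Real.sqrt_eq_zero'.2 h.le]
        exact mul_nonneg hβ.le (norm_nonneg _)
  obtain ⟨N, hN⟩ := eventually_atTop.1
    (hp.eventually (closedBall_mem_nhds _ (by norm_num : (0 : ℝ) < 1 / 4)))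
  obtain ⟨x, hxc, hx0, hx, hxflow⟩ := exists_normalizedGradient_curve_of_tendsto hC1 hLip hβ hLoj'
    (hp.comp (tendsto_add_atTop_nat N))
    (fun m => mem_closedBall_zero_iff.1 (hN _ (Nat.le_add_left N m)))
    (fun m => hppos (m + N))
  have hIoc : Ioc (0 : ℝ) (1 / 8) ⊆ Ioo 0 (1 / 4) := Ioc_subset_Ioo_right (by norm_num)
  have hIcc : Icc (0 : ℝ) (1 / 8) ⊆ Icc 0 (1 / 4) := Icc_subset_Icc_right (by norm_num)
  refine ⟨1 / 8, by norm_num, x, hxc.continuousOn, ?_, hx0,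
    fun s hs => ⟨(hxflow s (hIoc hs)).2, (hxflow s (hIoc hs)).1⟩, fun s hs => ?_⟩
  · refine ContinuousOn.congr (f := fun s => normalizedGradient u (x s)) (fun s hs => ?_)
      fun s hs => (hxflow s (hIoc hs)).2.deriv
    have hxs : x s ∈ ball 0 1 := mem_ball_zero_iff.2 <| by
      linarith [(hx s (hIcc (Ioc_subset_Icc_self hs))).1, hs.2]
    exact ((continuousAt_normalizedGradient isOpen_ball hLip hLoj' hxs (hxflow s (hIoc hs)).1).comp
      hxc.continuousAt).continuousWithinAt
  · obtain ⟨hxs, hsqrt⟩ := hx s (hIcc hs)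
    refine ⟨mem_closedBall_zero_iff.2 (by linarith [hs.2]), ?_⟩
    calc ‖x s‖ ≤ s := hxs
      _ = 2 * β * (s / (2 * β)) := by field_simp
      _ ≤ 2 * β * √(u (x s)) := by gcongr

/-- Proposition 3.6, saddle point: under the Łojasiewicz inequality, a
saddle point `0` admits an integral curve of the normalized gradient starting at `0`
along which `u > 0` and `|x(s)| ≤ 2β√(u(x(s)))`. -/
theorem stmt_5 (n : ℕ) (u : EuclideanSpace ℝ (Fin n) → ℝ) (β K : ℝ) (L : NNReal)
    (hβ : 0 < β)
    (hcont : ContinuousOn u (closedBall 0 1))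
    (hC1 : DifferentiableOn ℝ u (ball 0 1))
    (hLip : LipschitzOnWith L (gradient u) (ball 0 1))
    (hHess : ∀ z ∈ ball (0 : EuclideanSpace ℝ (Fin n)) 1,
      DifferentiableAt ℝ (gradient u) z ∧ ‖fderiv ℝ (gradient u) z‖ ≤ K)
    (hu0 : u 0 = 0)
    (hLoj : ∀ y ∈ ball (0 : EuclideanSpace ℝ (Fin n)) 1,
      |u y| ^ ((1 : ℝ) / 2) ≤ β * ‖gradient u y‖)
    (p : ℕ → EuclideanSpace ℝ (Fin n))
    (hp : Filter.Tendsto p Filter.atTop (nhds 0))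
    (hpmem : ∀ i, p i ∈ ball (0 : EuclideanSpace ℝ (Fin n)) 1)
    (hppos : ∀ i, 0 < u (p i)) :
    ∃ δ > (0 : ℝ), ∃ x : ℝ → EuclideanSpace ℝ (Fin n),
      ContinuousOn x (Icc 0 δ) ∧
      ContinuousOn (deriv x) (Ioc 0 δ) ∧
      x 0 = 0 ∧
      (∀ s ∈ Ioc 0 δ,
        HasDerivAt x (‖gradient u (x s)‖⁻¹ • gradient u (x s)) s ∧ 0 < u (x s)) ∧
      (∀ s ∈ Icc 0 δ, x s ∈ closedBall (0 : EuclideanSpace ℝ (Fin n)) 1 ∧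
        ‖x s‖ ≤ 2 * β * Real.sqrt (u (x s))) :=
  stmt_5_general n u β L hβ hC1 hLip hLoj p hp hppos
end

section
/- Let u be C¹ with the Łojasiewicz inequality sqrt(−u(x)) ≤ β|∇u(x)| holding on a region R where u < 0, and let x : [0, ŝ) → R be a unit-speed integral curve of N = ∇u/|∇u| with u(x(0)) = u(p) < 0. Then sqrt(−u(p)) ≥ sqrt(−u(x(s))) + s/(2β) for all s ∈ [0, ŝ); in particular ŝ ≤ 2β·sqrt(−u(p)), and if x(s) → q ∈ R̄ as s → ŝ then |p − q| ≤ 2β·sqrt(−u(p)). -/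
open Set Filter Topology

/-! Along a unit-speed integral curve of `∇u / ‖∇u‖` the value of `u` grows at rate `‖∇u‖`, so
`d/ds √(-u) = -‖∇u‖ / (2√(-u)) ≤ -1/(2β)` by the Łojasiewicz inequality. Hence
`√(-u(x s)) + s/(2β)` is nonincreasing, which bounds the lifetime `ŝ` of the curve by `2β√(-u(p))`;
since the curve has unit speed, its displacement is at most its lifetime. -/

section LojasiewiczODE

variable {φ φ' : ℝ → ℝ} {β T : ℝ}

theorem antitoneOn_sqrt_neg_add_div_of_sqrt_neg_le {D : Set ℝ} (hD : Convex ℝ D) (hβ : 0 < β)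
    (hφ : ∀ t ∈ D, φ t < 0) (hderiv : ∀ t ∈ D, HasDerivAt φ (φ' t) t)
    (hloj : ∀ t ∈ D, √(-φ t) ≤ β * φ' t) :
    AntitoneOn (fun t => √(-φ t) + t / (2 * β)) D := by
  have hsum : ∀ t ∈ D, HasDerivAt (fun t => √(-φ t) + t / (2 * β))
      (-φ' t / (2 * √(-φ t)) + 1 / (2 * β)) t := fun t ht =>
    ((hderiv t ht).neg.sqrt (neg_ne_zero.2 (hφ t ht).ne)).add ((hasDerivAt_id t).div_const _)
  refine antitoneOn_of_hasDerivWithinAt_nonpos hD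
    (fun t ht => (hsum t ht).continuousAt.continuousWithinAt)
    (fun t ht => (hsum t (interior_subset ht)).hasDerivWithinAt) fun t ht => ?_
  have ht := interior_subset ht
  have hsqrt : 0 < √(-φ t) := Real.sqrt_pos.2 (by linarith [hφ t ht])
  have : 1 / (2 * β) ≤ φ' t / (2 * √(-φ t)) := by
    rw [div_le_div_iff₀ (by positivity) (by positivity)]
    linarith [hloj t ht]
  rw [neg_div]
  linarith

theorem sqrt_neg_add_div_le_of_sqrt_neg_le (hβ : 0 < β) (hT : 0 < T)
    (hφ : ∀ t ∈ Ico 0 T, φ t < 0) (hderiv : ∀ t ∈ Ico 0 T, HasDerivAt φ (φ' t) t)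
    (hloj : ∀ t ∈ Ico 0 T, √(-φ t) ≤ β * φ' t) :
    ∀ t ∈ Ico 0 T, √(-φ t) + t / (2 * β) ≤ √(-φ 0) := fun t ht => by
  simpa using antitoneOn_sqrt_neg_add_div_of_sqrt_neg_le (convex_Ico 0 T) hβ hφ hderiv hloj
    ⟨le_rfl, hT⟩ ht ht.1

theorem le_two_mul_mul_sqrt_neg_of_sqrt_neg_le (hβ : 0 < β) (hT : 0 < T)
    (hφ : ∀ t ∈ Ico 0 T, φ t < 0) (hderiv : ∀ t ∈ Ico 0 T, HasDerivAt φ (φ' t) t)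
    (hloj : ∀ t ∈ Ico 0 T, √(-φ t) ≤ β * φ' t) :
    T ≤ 2 * β * √(-φ 0) := by
  have hbound := sqrt_neg_add_div_le_of_sqrt_neg_le hβ hT hφ hderiv hloj
  refine le_of_forall_lt_imp_le_of_dense fun t htT => ?_
  rcases lt_or_ge t 0 with ht | ht
  · exact ht.le.trans (by positivity)
  · have h := hbound t ⟨ht, htT⟩
    have : t / (2 * β) ≤ √(-φ 0) := by linarith [Real.sqrt_nonneg (-φ t)]
    rwa [div_le_iff₀ (by positivity), mul_comm] at this

end LojasiewiczODE

theorem norm_inv_norm_smul_le_one {F : Type*} [NormedAddCommGroup F] [NormedSpace ℝ F] (v : F) :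
    ‖‖v‖⁻¹ • v‖ ≤ 1 := by
  rcases eq_or_ne v 0 with rfl | hv
  · simp
  · exact (norm_smul_inv_norm hv).le

theorem norm_sub_le_of_tendsto_of_norm_deriv_le_one {F : Type*} [NormedAddCommGroup F]
    [NormedSpace ℝ F] {x x' : ℝ → F} {T : ℝ} {q : F} (hT : 0 < T)
    (hx : ∀ t ∈ Ico 0 T, HasDerivAt x (x' t) t) (hx' : ∀ t ∈ Ico 0 T, ‖x' t‖ ≤ 1)
    (hq : Tendsto x (𝓝[<] T) (𝓝 q)) :
    ‖x 0 - q‖ ≤ T := by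
  have hdisp : ∀ t ∈ Ico 0 T, ‖x 0 - x t‖ ≤ T := fun t ht => by
    have := (convex_Ico 0 T).norm_image_sub_le_of_norm_hasDerivWithin_le
      (fun s hs => (hx s hs).hasDerivWithinAt) hx' ⟨le_rfl, hT⟩ ht
    rw [norm_sub_rev, Real.norm_of_nonneg (by linarith [ht.1])] at this
    linarith [ht.2]
  refine le_of_tendsto (hq.const_sub (x 0)).norm ?_
  filter_upwards [Ioo_mem_nhdsLT hT] with t ht
  exact hdisp t (Ioo_subset_Ico_self ht)

theorem hasDerivAt_comp_of_hasDerivAt_inv_norm_smul_gradient {E : Type*} [NormedAddCommGroup E]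
    [InnerProductSpace ℝ E] [CompleteSpace E] {u : E → ℝ} {x : ℝ → E} {s : ℝ}
    (hu : DifferentiableAt ℝ u (x s))
    (hx : HasDerivAt x (‖gradient u (x s)‖⁻¹ • gradient u (x s)) s) :
    HasDerivAt (u ∘ x) ‖gradient u (x s)‖ s := by
  have h := hu.hasGradientAt.hasFDerivAt.comp_hasDerivAt s hx
  rwa [InnerProductSpace.toDual_apply_apply, real_inner_smul_right, real_inner_self_eq_norm_sq,
    sq, ← mul_assoc, inv_mul_mul_self] at h

/-- arc-length bound along integral curves of the normalized gradient
under the Łojasiewicz inequality `√(-u) ≤ β|∇u|` on a region where `u < 0`. -/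
theorem stmt_12 (n : ℕ) (u : EuclideanSpace ℝ (Fin n) → ℝ) (β : ℝ) (hβ : 0 < β)
    (R : Set (EuclideanSpace ℝ (Fin n))) (hC1 : ∀ y ∈ R, DifferentiableAt ℝ u y)
    (hneg : ∀ y ∈ R, u y < 0)
    (hLoj : ∀ y ∈ R, Real.sqrt (-u y) ≤ β * ‖gradient u y‖)
    (sHat : ℝ) (hsHat : 0 < sHat)
    (x : ℝ → EuclideanSpace ℝ (Fin n))
    (hmem : ∀ s ∈ Ico 0 sHat, x s ∈ R)
    (hode : ∀ s ∈ Ico 0 sHat,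
      HasDerivAt x (‖gradient u (x s)‖⁻¹ • gradient u (x s)) s) :
    (∀ s ∈ Ico 0 sHat,
      Real.sqrt (-u (x s)) + s / (2 * β) ≤ Real.sqrt (-u (x 0))) ∧
    sHat ≤ 2 * β * Real.sqrt (-u (x 0)) ∧
    ∀ q : EuclideanSpace ℝ (Fin n),
      Filter.Tendsto x (nhdsWithin sHat (Iio sHat)) (nhds q) →
      ‖x 0 - q‖ ≤ 2 * β * Real.sqrt (-u (x 0)) := by
  have hφ : ∀ s ∈ Ico 0 sHat, (u ∘ x) s < 0 := fun s hs => hneg _ (hmem s hs)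
  have hderiv : ∀ s ∈ Ico 0 sHat, HasDerivAt (u ∘ x) ‖gradient u (x s)‖ s := fun s hs =>
    hasDerivAt_comp_of_hasDerivAt_inv_norm_smul_gradient (hC1 _ (hmem s hs)) (hode s hs)
  have hloj : ∀ s ∈ Ico 0 sHat, √(-(u ∘ x) s) ≤ β * ‖gradient u (x s)‖ := fun s hs =>
    hLoj _ (hmem s hs)
  have hlife := le_two_mul_mul_sqrt_neg_of_sqrt_neg_le hβ hsHat hφ hderiv hloj
  refine ⟨sqrt_neg_add_div_le_of_sqrt_neg_le hβ hsHat hφ hderiv hloj, hlife, fun q hq => ?_⟩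
  exact (norm_sub_le_of_tendsto_of_norm_deriv_le_one hsHat hode
    (fun s _ => norm_inv_norm_smul_le_one _) hq).trans hlife
end
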